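/- Let G be a graph on ten vertices such that both G and its complement are minimally t-imperfect, with the standard 10-vertex labeling. If u_iu_{i+1} is an edge of G for every i = 1,…,5 (indices mod 5), then U induces exactly the 5-cycle u1u2u3u4u5 (no chords), and G is (3,3)-partitionable. -/

import Mathlib

/-! A chord `u_i u_{i+2}` of `U` would make the seven vertices
`v_i, v_{i+1}, v_{i+2}, u_i, u_{i+2}, u_{i+3}, u_{i+4}` induce a graph without stable sets of size
three: each of their triples spans an edge forced by the labeling, by the edges `u_j u_{j+1}` or by
the chord. The constant vector `1/3` lies in `P` of every graph, but on this induced subgraph its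
weight `7/3` exceeds `2`, an upper bound for the weight of every point of the stable set polytope.
So this proper t-minor of `G` is t-imperfect, contradicting minimality; hence `U` induces the
5-cycle. Then every adjacency of `G` is determined except the optional edges `u_i v_i`, and
rotating two fixed patterns gives, for each vertex, a partition of the other nine vertices into
three stable sets avoiding all `u_i v_i`, and one into three triangles of forced edges. -/

open SimpleGraph

namespace TP

/-- A set of vertices is independent: no two of its vertices are adjacent. -/
def IsIndep {V : Type*} (G : SimpleGraph V) (S : Set V) : Prop :=
  S.Pairwise fun u v => ¬ G.Adj u v

/-- The finite vertex set `s` induces a cycle of length `n` in `G`. -/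
def IsInducedCycle {V : Type*} (G : SimpleGraph V) (n : ℕ) (s : Finset V) : Prop :=
  3 ≤ n ∧ s.card = n ∧ Nonempty (G.induce (s : Set V) ≃g SimpleGraph.cycleGraph n)

/-- The polytope `P(G)` given by nonnegativity, edge and odd-cycle inequalities. -/
def tPolytope {V : Type*} [Fintype V] (G : SimpleGraph V) : Set (V → ℝ) :=
  {x | (∀ v, 0 ≤ x v ∧ x v ≤ 1) ∧
    (∀ ⦃u v⦄, G.Adj u v → x u + x v ≤ 1) ∧
    (∀ (n : ℕ) (s : Finset V), Odd n → IsInducedCycle G n s →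
      ∑ v ∈ s, x v ≤ ((n : ℝ) - 1) / 2)}

/-- The independent set polytope: the convex hull of characteristic vectors of
independent sets. -/
def stabPolytope {V : Type*} [Fintype V] (G : SimpleGraph V) : Set (V → ℝ) :=
  convexHull ℝ {x | ∃ S : Set V, IsIndep G S ∧ x = S.indicator fun _ => (1 : ℝ)}

/-- A graph is t-perfect if `P(G)` equals its independent set polytope. -/
def TPerfect {V : Type*} [Fintype V] (G : SimpleGraph V) : Prop :=
  tPolytope G = stabPolytope G

/-- The graph obtained from `G` by a t-contraction at `v` : the closed neighbourhood
of `v` is replaced by a single new vertex (`none`), adjacent to every vertex that had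
a neighbour in the closed neighbourhood of `v`. -/
def tContract {V : Type*} (G : SimpleGraph V) (v : V) :
    SimpleGraph (Option {w : V // w ≠ v ∧ ¬ G.Adj v w}) :=
  SimpleGraph.fromRel fun a b =>
    match a, b with
    | some a, some b => G.Adj a.1 b.1
    | some a, none => ∃ x, (x = v ∨ G.Adj v x) ∧ G.Adj a.1 x
    | none, _ => False

/-- A bundled finite simple graph. -/
structure FinGraph : Type 1 where
  V : Type
  [fintype : Fintype V]
  graph : SimpleGraph V

attribute [instance] FinGraph.fintype

def FinGraph.of {V : Type} [Fintype V] (G : SimpleGraph V) : FinGraph :=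
  FinGraph.mk V G

/-- `B` is obtained from `A` by deleting one vertex (up to isomorphism). -/
def DeleteStep (A B : FinGraph) : Prop :=
  ∃ v : A.V, Nonempty (B.graph ≃g A.graph.induce {w | w ≠ v})

/-- `B` is obtained from `A` by a t-contraction at a vertex whose neighbourhood is
independent (up to isomorphism). -/
def ContractStep (A B : FinGraph) : Prop :=
  ∃ v : A.V, IsIndep A.graph (A.graph.neighborSet v) ∧
    Nonempty (B.graph ≃g tContract A.graph v)

/-- One step: a vertex deletion or a t-contraction. -/
def Step (A B : FinGraph) : Prop := DeleteStep A B ∨ ContractStep A B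

/-- `TMinor B A` : `B` is a t-minor of `A`, i.e. obtained from `A` by a sequence of
vertex deletions and t-contractions. -/
def TMinor (B A : FinGraph) : Prop := Relation.ReflTransGen Step A B

/-- `B` is a proper t-minor of `A` : a t-minor with fewer vertices. -/
def ProperTMinor (B A : FinGraph) : Prop :=
  TMinor B A ∧ Fintype.card B.V < Fintype.card A.V

/-- A graph is minimally t-imperfect if it is not t-perfect but every proper t-minor
of it is t-perfect. -/
def MinimallyTImperfect {V : Type} [Fintype V] (G : SimpleGraph V) : Prop :=
  ¬ TPerfect G ∧ ∀ B : FinGraph, ProperTMinor B (FinGraph.of G) → TPerfect B.graph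

/-- A core graph: every proper t-minor of `G` and every proper t-minor of its
complement is t-perfect. -/
def IsCore {V : Type} [Fintype V] (G : SimpleGraph V) : Prop :=
  (∀ B : FinGraph, ProperTMinor B (FinGraph.of G) → TPerfect B.graph) ∧
  (∀ B : FinGraph, ProperTMinor B (FinGraph.of Gᶜ) → TPerfect B.graph)

/-- A partition of `V \ {v}` into `count` sets of size `size`, all satisfying `P`. -/
def CoverOff {V : Type*} (v : V) (count size : ℕ) (P : Finset V → Prop) : Prop :=
  ∃ f : Fin count → Finset V,
    (∀ i, P (f i) ∧ (f i).card = size) ∧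
    (∀ i j, i ≠ j → Disjoint (f i) (f j)) ∧
    (∀ i, v ∉ f i) ∧
    (∀ w, w ≠ v → ∃ i, w ∈ f i)

/-- `(p,q)`-partitionable graphs. -/
def PQPartitionable {V : Type*} [Fintype V] (G : SimpleGraph V) (p q : ℕ) : Prop :=
  2 ≤ p ∧ 2 ≤ q ∧ Fintype.card V = p * q + 1 ∧
  ∀ v : V,
    CoverOff v q p (fun S => IsIndep G (S : Set V)) ∧
    CoverOff v p q (fun S => G.IsClique (S : Set V))

/-- `G` has an odd hole: an induced odd cycle of length at least five. -/
def HasOddHole {V : Type*} (G : SimpleGraph V) : Prop :=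
  ∃ (n : ℕ) (s : Finset V), Odd n ∧ 5 ≤ n ∧ IsInducedCycle G n s

/-- A graph is perfect iff neither it nor its complement has an odd hole. -/
def GPerfect {V : Type*} (G : SimpleGraph V) : Prop :=
  ¬ HasOddHole G ∧ ¬ HasOddHole Gᶜ

/-- Every vertex has degree at least three and at most five. -/
def DegreeBounded {V : Type*} (G : SimpleGraph V) : Prop :=
  ∀ v, 3 ≤ (G.neighborSet v).ncard ∧ (G.neighborSet v).ncard ≤ 5

/-- The `n`-wheel: an `n`-cycle plus a vertex (`none`) adjacent to every cycle vertex. -/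
def wheel (n : ℕ) : SimpleGraph (Option (Fin n)) :=
  SimpleGraph.fromRel fun a b =>
    match a, b with
    | some i, some j => (SimpleGraph.cycleGraph n).Adj i j
    | none, some _ => True
    | _, none => False

/-- Vertex type of the standard 9-vertex labeling: `inl i` is `v_{i+1}`,
`inr j` is `u_{j+1}`. -/
abbrev V9 := Fin 5 ⊕ Fin 4

/-- Vertex type of the standard 10-vertex labeling. -/
abbrev V10 := Fin 5 ⊕ Fin 5

/-- The standard 9-vertex labeling: `v1 … v5` form a 5-hole; the neighbours of `u_i`
among the `v`'s are `v_{i+2}` and `v_{i+3}` together possibly with `v_i`. -/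
def Std9 (G : SimpleGraph V9) : Prop :=
  (∀ i j : Fin 5, G.Adj (.inl i) (.inl j) ↔ (j = i + 1 ∨ i = j + 1)) ∧
  (∀ (i : Fin 4) (k : Fin 5), G.Adj (.inr i) (.inl k) →
    k = i.castSucc + 2 ∨ k = i.castSucc + 3 ∨ k = i.castSucc) ∧
  (∀ i : Fin 4, G.Adj (.inr i) (.inl (i.castSucc + 2)) ∧ G.Adj (.inr i) (.inl (i.castSucc + 3)))

/-- The standard 10-vertex labeling. -/
def Std10 (G : SimpleGraph V10) : Prop :=
  (∀ i j : Fin 5, G.Adj (.inl i) (.inl j) ↔ (j = i + 1 ∨ i = j + 1)) ∧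
  (∀ (i k : Fin 5), G.Adj (.inr i) (.inl k) → k = i + 2 ∨ k = i + 3 ∨ k = i) ∧
  (∀ i : Fin 5, G.Adj (.inr i) (.inl (i + 2)) ∧ G.Adj (.inr i) (.inl (i + 3)))

/-- The 9-vertex graph of the standard labeling with prescribed `U`-edges and
prescribed extra edges `u_i v_i`. -/
def graph9 (uEdges : List (Fin 4 × Fin 4)) (extra : List (Fin 4)) : SimpleGraph V9 :=
  SimpleGraph.fromRel fun a b =>
    match a, b with
    | .inl i, .inl j => j = i + 1
    | .inr i, .inl k => k = i.castSucc + 2 ∨ k = i.castSucc + 3 ∨ (i ∈ extra ∧ k = i.castSucc)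
    | .inl _, .inr _ => False
    | .inr i, .inr j => (i, j) ∈ uEdges

/-- The 10-vertex graph of the standard labeling with prescribed `U`-edges and
prescribed extra edges `u_i v_i`. -/
def graph10 (uEdges : List (Fin 5 × Fin 5)) (extra : List (Fin 5)) : SimpleGraph V10 :=
  SimpleGraph.fromRel fun a b =>
    match a, b with
    | .inl i, .inl j => j = i + 1
    | .inr i, .inl k => k = i + 2 ∨ k = i + 3 ∨ (i ∈ extra ∧ k = i)
    | .inl _, .inr _ => False
    | .inr i, .inr j => (i, j) ∈ uEdges

/-- The graph `(12°435°1)`. -/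
def G12435 : SimpleGraph V10 :=
  graph10 [(0,1),(1,3),(3,2),(2,4),(4,0)] [1,4]

/-- The graph `(1°2°435°1°)`. -/
def G12435' : SimpleGraph V10 :=
  graph10 [(0,1),(1,3),(3,2),(2,4),(4,0)] [0,1,4]

open Finset

theorem IsIndep.anti {V : Type*} {G H : SimpleGraph V} {S : Set V} (hGH : G ≤ H)
    (hS : IsIndep H S) : IsIndep G S :=
  hS.mono' fun _ _ hn hadj => hn (hGH hadj)

instance {V : Type*} [DecidableEq V] (G : SimpleGraph V) [DecidableRel G.Adj] (s : Finset V) :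
    Decidable (IsIndep G (s : Set V)) :=
  inferInstanceAs (Decidable ((s : Set V).Pairwise _))

theorem CoverOff.mono {V : Type*} {v : V} {count size : ℕ} {P Q : Finset V → Prop}
    (h : CoverOff v count size P) (hPQ : ∀ S, P S → Q S) : CoverOff v count size Q :=
  let ⟨f, hf, hdisj, hv, hcov⟩ := h
  ⟨f, fun i => ⟨hPQ _ (hf i).1, (hf i).2⟩, hdisj, hv, hcov⟩

section TImperfection

variable {W : Type*} [Fintype W] (H : SimpleGraph W)

theorem const_third_mem_tPolytope : (fun _ => (1 / 3 : ℝ)) ∈ tPolytope H := by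
  refine ⟨fun _ => by norm_num, fun _ _ _ => by norm_num, fun n s _ ⟨hn, hcard, _⟩ => ?_⟩
  have : (3 : ℝ) ≤ n := by exact_mod_cast hn
  rw [sum_const, hcard, nsmul_eq_mul]
  linarith

variable {H}

theorem sum_le_of_mem_stabPolytope {k : ℕ} (hα : ∀ S, IsIndep H S → S.ncard ≤ k)
    {x : W → ℝ} (hx : x ∈ stabPolytope H) : ∑ v, x v ≤ k := by
  have hlin : IsLinearMap ℝ fun y : W → ℝ => ∑ v, y v :=
    ⟨fun _ _ => sum_add_distrib, fun _ _ => (mul_sum ..).symm⟩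
  refine convexHull_min ?_ (convex_halfSpace_le hlin _) hx
  · rintro _ ⟨S, hS, rfl⟩
    classical
    simp only [Set.mem_ofPred_eq, Set.indicator_apply, sum_boole]
    rw [Set.filter_mem_univ_eq_toFinset, ← Set.ncard_eq_toFinset_card']
    exact_mod_cast hα S hS

theorem not_tPerfect_of_ncard_isIndep_le {k : ℕ} (hα : ∀ S, IsIndep H S → S.ncard ≤ k)
    (hk : 3 * k < Fintype.card W) : ¬ TPerfect H := by
  intro hH
  have h := sum_le_of_mem_stabPolytope hα (hH ▸ const_third_mem_tPolytope H)
  rw [sum_const, card_univ, nsmul_eq_mul] at h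
  have : (3 * k : ℝ) < Fintype.card W := by exact_mod_cast hk
  linarith

end TImperfection

section InducedMinors

variable {V : Type} [DecidableEq V] (G : SimpleGraph V)

def induceEraseIso (s : Finset V) {v : V} (hv : v ∈ s) :
    G.induce ↑(s.erase v) ≃g (G.induce ↑s).induce {w | w ≠ ⟨v, hv⟩} where
  toFun x := ⟨⟨x.1, mem_of_mem_erase x.2⟩, fun h => (mem_erase.1 x.2).1 (congrArg Subtype.val h)⟩
  invFun y := ⟨y.1.1, mem_erase.2 ⟨fun h => y.2 (Subtype.ext h), y.1.2⟩⟩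
  left_inv _ := rfl
  right_inv _ := rfl
  map_rel_iff' := Iff.rfl

theorem deleteStep_induce_erase (s : Finset V) {v : V} (hv : v ∈ s) :
    DeleteStep (.of (G.induce ↑s)) (.of (G.induce ↑(s.erase v))) :=
  ⟨⟨v, hv⟩, ⟨induceEraseIso G s hv⟩⟩

theorem deleteStep_induce_univ_erase [Fintype V] (v : V) :
    DeleteStep (.of G) (.of (G.induce ↑(univ.erase v))) :=
  ⟨v, ⟨{ toEquiv := Equiv.subtypeEquivRight fun _ => by simp; rfl, map_rel_iff' := Iff.rfl }⟩⟩

theorem tMinor_induce [Fintype V] (s : Finset V) (hs : s ≠ univ) :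
    TMinor (.of (G.induce ↑s)) (.of G) := by
  obtain ⟨v, hv⟩ : ∃ v, v ∉ s := by simpa [eq_univ_iff_forall] using hs
  by_cases hins : insert v s = univ
  · rw [← erase_insert hv, hins]
    exact .single (.inl (deleteStep_induce_univ_erase G v))
  · have hstep := deleteStep_induce_erase G (insert v s) (mem_insert_self v s)
    rw [erase_insert hv] at hstep
    exact (tMinor_induce (insert v s) hins).tail (.inl hstep)
termination_by sᶜ.card
decreasing_by exact card_lt_card (compl_ssubset_compl.2 (ssubset_insert hv))

theorem properTMinor_induce [Fintype V] (s : Finset V) (hs : s ≠ univ) :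
    ProperTMinor (.of (G.induce ↑s)) (.of G) :=
  ⟨tMinor_induce G s hs, (Fintype.card_coe s).trans_lt ((card_lt_iff_ne_univ s).2 hs)⟩

end InducedMinors

theorem MinimallyTImperfect.exists_isIndep_ncard_gt {V : Type} [Fintype V] [DecidableEq V]
    {G : SimpleGraph V} (hG : MinimallyTImperfect G) {s : Finset V} (hs : s ≠ univ) {k : ℕ}
    (hk : 3 * k < s.card) : ∃ T ⊆ (s : Set V), IsIndep G T ∧ k < T.ncard := by
  by_contra! hα
  refine not_tPerfect_of_ncard_isIndep_le (k := k) (fun S hS => ?_) ?_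
    (hG.2 _ (properTMinor_induce G s hs))
  · rw [← Set.ncard_image_of_injective S Subtype.val_injective]
    refine hα _ (Subtype.coe_image_subset _ S) ?_
    exact (Subtype.val_injective.injOn).pairwise_image.2 hS
  · exact hk.trans_eq (Fintype.card_coe s).symm

section StandardLabeling

instance (uEdges : List (Fin 5 × Fin 5)) (extra : List (Fin 5)) :
    DecidableRel (graph10 uEdges extra).Adj
  | .inl i, .inl j => inferInstanceAs (Decidable (_ ∧ (j = i + 1 ∨ i = j + 1)))
  | .inr i, .inl k => inferInstanceAs
      (Decidable (_ ∧ ((k = i + 2 ∨ k = i + 3 ∨ (i ∈ extra ∧ k = i)) ∨ False)))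
  | .inl k, .inr i => inferInstanceAs
      (Decidable (_ ∧ (False ∨ (k = i + 2 ∨ k = i + 3 ∨ (i ∈ extra ∧ k = i)))))
  | .inr i, .inr j => inferInstanceAs (Decidable (_ ∧ ((i, j) ∈ uEdges ∨ (j, i) ∈ uEdges)))

def uCycle : List (Fin 5 × Fin 5) := [(0, 1), (1, 2), (2, 3), (3, 4), (4, 0)]

theorem mem_uCycle : ∀ i j : Fin 5, (i, j) ∈ uCycle ↔ j = i + 1 := by decide

/-- Once `U` induces the 5-cycle, `forcedGraph ≤ G ≤ admissibleGraph`; the two differ exactly in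
the optional edges `u_i v_i`. -/
def forcedGraph : SimpleGraph V10 := graph10 uCycle []

def admissibleGraph : SimpleGraph V10 := graph10 uCycle (List.finRange 5)

def chordGraph (i : Fin 5) : SimpleGraph V10 := graph10 ((i, i + 2) :: uCycle) []

def chordSet (i : Fin 5) : Finset V10 :=
  {.inl i, .inl (i + 1), .inl (i + 2), .inr i, .inr (i + 2), .inr (i + 3), .inr (i + 4)}

theorem chordSet_card : ∀ i, (chordSet i).card = 7 := by decide

theorem chordSet_ne_univ : ∀ i, chordSet i ≠ univ := by decide

theorem ncard_le_two_of_isIndep_chordGraph (i : Fin 5) {T : Set V10} (hT : T ⊆ chordSet i)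
    (hind : IsIndep (chordGraph i) T) : T.ncard ≤ 2 := by
  have htriangle : ∀ i, ∀ a ∈ chordSet i, ∀ b ∈ chordSet i, ∀ c ∈ chordSet i,
      a ≠ b → a ≠ c → b ≠ c →
        (chordGraph i).Adj a b ∨ (chordGraph i).Adj a c ∨ (chordGraph i).Adj b c := by
    unfold chordGraph; decide
  by_contra! h
  obtain ⟨a, b, c, ha, hb, hc, hab, hac, hbc⟩ := (Set.two_lt_ncard_iff).1 h
  rcases htriangle i a (hT ha) b (hT hb) c (hT hc) hab hac hbc with h | h | h
  exacts [hind ha hb hab h, hind ha hc hac h, hind hb hc hbc h]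

def indepCover : V10 → Fin 3 → Finset V10
  | .inl k => ![{.inl (k + 1), .inl (k + 4), .inr k}, {.inl (k + 2), .inr (k + 1), .inr (k + 3)},
      {.inl (k + 3), .inr (k + 2), .inr (k + 4)}]
  | .inr k => ![{.inl k, .inr (k + 1), .inr (k + 4)}, {.inl (k + 1), .inl (k + 3), .inr (k + 2)},
      {.inl (k + 2), .inl (k + 4), .inr (k + 3)}]

def cliqueCover : V10 → Fin 3 → Finset V10
  | .inl k => ![{.inl (k + 1), .inr (k + 3), .inr (k + 4)}, {.inl (k + 2), .inl (k + 3), .inr k},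
      {.inl (k + 4), .inr (k + 1), .inr (k + 2)}]
  | .inr k => ![{.inl k, .inr (k + 2), .inr (k + 3)}, {.inl (k + 1), .inl (k + 2), .inr (k + 4)},
      {.inl (k + 3), .inl (k + 4), .inr (k + 1)}]

theorem coverOff_indepCover (v : V10) :
    CoverOff v 3 3 (fun S => IsIndep admissibleGraph (S : Set V10)) :=
  ⟨indepCover v, by unfold admissibleGraph; revert v; decide⟩

theorem coverOff_cliqueCover (v : V10) :
    CoverOff v 3 3 (fun S => forcedGraph.IsClique (S : Set V10)) :=
  ⟨cliqueCover v, by unfold forcedGraph; revert v; decide⟩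

variable {G : SimpleGraph V10}

theorem Std10.graph10_le (hstd : Std10 G) {uEdges : List (Fin 5 × Fin 5)} {extra : List (Fin 5)}
    (hU : ∀ e ∈ uEdges, G.Adj (.inr e.1) (.inr e.2))
    (hextra : ∀ i ∈ extra, G.Adj (.inr i) (.inl i)) :
    graph10 uEdges extra ≤ G := by
  have huv : ∀ i k, (k = i + 2 ∨ k = i + 3 ∨ (i ∈ extra ∧ k = i)) → G.Adj (.inr i) (.inl k) := by
    rintro i k (rfl | rfl | ⟨hi, rfl⟩)
    exacts [(hstd.2.2 i).1, (hstd.2.2 i).2, hextra _ hi]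
  rintro (i | i) (j | j) ⟨-, h | h⟩
  · exact (hstd.1 i j).2 (.inl h)
  · exact (hstd.1 i j).2 (.inr h)
  · exact h.elim
  · exact (huv j i h).symm
  · exact huv i j h
  · exact h.elim
  · exact hU _ h
  · exact (hU _ h).symm

theorem Std10.le_graph10 (hstd : Std10 G) {uEdges : List (Fin 5 × Fin 5)}
    (hU : ∀ i j, G.Adj (.inr i) (.inr j) → (i, j) ∈ uEdges ∨ (j, i) ∈ uEdges) :
    G ≤ graph10 uEdges (List.finRange 5) := by
  have huv : ∀ i k, G.Adj (.inr i) (.inl k) →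
      k = i + 2 ∨ k = i + 3 ∨ (i ∈ List.finRange 5 ∧ k = i) := fun i k h => by
    simpa using hstd.2.1 i k h
  rintro (i | i) (j | j) h <;> refine ⟨G.ne_of_adj h, ?_⟩
  · exact (hstd.1 i j).1 h
  · exact .inr (huv j i h.symm)
  · exact .inl (huv i j h)
  · exact hU i j h

theorem adj_of_mem_uCycle (hall : ∀ i : Fin 5, G.Adj (.inr i) (.inr (i + 1))) :
    ∀ e ∈ uCycle, G.Adj (.inr e.1) (.inr e.2) := by
  rintro ⟨i, j⟩ he
  rw [(mem_uCycle i j).1 he]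
  exact hall i

theorem Std10.forcedGraph_le (hstd : Std10 G) (hall : ∀ i : Fin 5, G.Adj (.inr i) (.inr (i + 1))) :
    forcedGraph ≤ G :=
  hstd.graph10_le (adj_of_mem_uCycle hall) (by simp)

theorem Std10.chordGraph_le (hstd : Std10 G) (hall : ∀ i : Fin 5, G.Adj (.inr i) (.inr (i + 1)))
    {i : Fin 5} (hchord : G.Adj (.inr i) (.inr (i + 2))) : chordGraph i ≤ G :=
  hstd.graph10_le (List.forall_mem_cons.2 ⟨hchord, adj_of_mem_uCycle hall⟩) (by simp)

theorem Std10.not_adj_inr_add_two (hstd : Std10 G) (hG : MinimallyTImperfect G)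
    (hall : ∀ i : Fin 5, G.Adj (.inr i) (.inr (i + 1))) (i : Fin 5) :
    ¬ G.Adj (.inr i) (.inr (i + 2)) := by
  intro hchord
  obtain ⟨T, hTs, hind, hT⟩ := hG.exists_isIndep_ncard_gt (chordSet_ne_univ i) (k := 2)
    (by rw [chordSet_card]; norm_num)
  exact hT.not_ge
    (ncard_le_two_of_isIndep_chordGraph i hTs (hind.anti (hstd.chordGraph_le hall hchord)))

theorem adj_inr_iff_of_not_adj_inr_add_two (hall : ∀ i : Fin 5, G.Adj (.inr i) (.inr (i + 1)))
    (hchord : ∀ i : Fin 5, ¬ G.Adj (.inr i) (.inr (i + 2))) (i j : Fin 5) :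
    G.Adj (.inr i) (.inr j) ↔ j = i + 1 ∨ i = j + 1 := by
  refine ⟨fun h => ?_, by rintro (rfl | rfl); exacts [hall i, (hall j).symm]⟩
  have hne : i ≠ j := fun hij => G.irrefl (hij ▸ h)
  have hcases : ∀ i j : Fin 5, i ≠ j → j = i + 1 ∨ i = j + 1 ∨ j = i + 2 ∨ i = j + 2 := by
    decide
  rcases hcases i j hne with h' | h' | rfl | rfl
  exacts [.inl h', .inr h', (hchord i h).elim, (hchord j h.symm).elim]

theorem Std10.pqPartitionable (hstd : Std10 G) (hall : ∀ i : Fin 5, G.Adj (.inr i) (.inr (i + 1)))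
    (hU : ∀ i j : Fin 5, G.Adj (.inr i) (.inr j) ↔ (j = i + 1 ∨ i = j + 1)) :
    PQPartitionable G 3 3 := by
  have hle : G ≤ admissibleGraph :=
    hstd.le_graph10 fun i j h => by simpa only [mem_uCycle] using (hU i j).1 h
  refine ⟨by norm_num, by norm_num, rfl, fun v => ⟨?_, ?_⟩⟩
  · exact (coverOff_indepCover v).mono fun S hS => hS.anti hle
  · exact (coverOff_cliqueCover v).mono fun S hS => hS.mono (hstd.forcedGraph_le hall)

end StandardLabeling

theorem stmt14_general (G : SimpleGraph V10)
    (hG : MinimallyTImperfect G)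
    (hstd : Std10 G)
    (hall : ∀ i : Fin 5, G.Adj (.inr i) (.inr (i + 1))) :
    (∀ i j : Fin 5, G.Adj (.inr i) (.inr j) ↔ (j = i + 1 ∨ i = j + 1)) ∧
    PQPartitionable G 3 3 := by
  have hU := adj_inr_iff_of_not_adj_inr_add_two hall (hstd.not_adj_inr_add_two hG hall)
  exact ⟨hU, hstd.pqPartitionable hall hU⟩

/-- if both `G` and its complement are minimally t-imperfect (standard
10-vertex labeling) and all edges `u_iu_{i+1}` are present, then `U` induces exactly
the 5-cycle and `G` is (3,3)-partitionable. -/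
theorem stmt14 (G : SimpleGraph V10)
    (hG : MinimallyTImperfect G) (hGc : MinimallyTImperfect Gᶜ)
    (hstd : Std10 G)
    (hall : ∀ i : Fin 5, G.Adj (.inr i) (.inr (i + 1))) :
    (∀ i j : Fin 5, G.Adj (.inr i) (.inr j) ↔ (j = i + 1 ∨ i = j + 1)) ∧
    PQPartitionable G 3 3 :=
  stmt14_general G hG hstd hall

end TP
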